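/- (Addition formula, odd case) For all real α, β > -1/2, nonnegative integer n, and real x, y with x²+y² > 0: (xy/√(x²+y²)) H^{α+β+3/2}_{2n+1}(√(x²+y²)) = (1/2) Σ_{k=0}^n C(n,k) H^α_{2(n-k)+1}(x) H^β_{2k+1}(y). -/

import Mathlib

open Finset

/-- Rising factorial (Pochhammer symbol) on ℝ. -/
noncomputable def asc (a : ℝ) (k : ℕ) : ℝ := ∏ i ∈ Finset.range k, (a + i)

/-- Generalized Laguerre polynomial `L_n^α(x)`. -/
noncomputable def lag (n : ℕ) (α : ℝ) (x : ℝ) : ℝ :=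
  ∑ j ∈ Finset.range (n + 1),
    ((-1 : ℝ) ^ j / (j.factorial * (n - j).factorial)) * asc (α + j + 1) (n - j) * x ^ j

/-- Generalized Hermite polynomial of even degree: `H^μ_{2n}`. -/
noncomputable def Heven (μ : ℝ) (n : ℕ) (x : ℝ) : ℝ :=
  (-1 : ℝ) ^ n * 2 ^ (2 * n) * n.factorial * lag n (μ - 1/2) (x ^ 2)

/-- Generalized Hermite polynomial of odd degree: `H^μ_{2n+1}`. -/
noncomputable def Hodd (μ : ℝ) (n : ℕ) (x : ℝ) : ℝ :=
  (-1 : ℝ) ^ n * 2 ^ (2 * n + 1) * n.factorial * x * lag n (μ + 1/2) (x ^ 2)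

/-- Generalized Hermite polynomial `H^μ_n`. -/
noncomputable def GH (μ : ℝ) (n : ℕ) (x : ℝ) : ℝ :=
  if n % 2 = 0 then Heven μ (n / 2) x else Hodd μ (n / 2) x

/-!
Since `H^μ_{2n+1}(t) = c_n t L_n^{μ+1/2}(t²)` with `c_n = (-1)^n 2^{2n+1} n!`, the identity is the
Laguerre addition formula `L_n^{a+b+1}(u+v) = ∑_{k+l=n} L_k^a(u) L_l^b(v)` combined with
`C(k+l,k) c_k c_l = 2 c_{k+l}`. Writing `L_n^a(u) = ∑_{j+m=n} (-u)^j/j! · multichoose(a+j+1, m)`,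
the addition formula follows from the binomial theorem for `(-(u+v))^j/j!` and the Chu–Vandermonde
identity for `multichoose`, after regrouping the resulting four-fold sum over `p+q+r+s = n`.
-/

namespace Finset.Nat

theorem sum_antidiagonal_antidiagonal_transpose {M : Type*} [AddCommMonoid M] (n : ℕ)
    (f : ℕ → ℕ → ℕ → ℕ → M) :
    ∑ x ∈ antidiagonal n, ∑ y ∈ antidiagonal x.1, ∑ z ∈ antidiagonal x.2, f y.1 y.2 z.1 z.2 =
      ∑ x ∈ antidiagonal n, ∑ y ∈ antidiagonal x.1, ∑ z ∈ antidiagonal x.2,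
        f y.1 z.1 y.2 z.2 := by
  simp only [← sum_product']
  rw [sum_sigma', sum_sigma']
  set S := (antidiagonal n).sigma fun x => antidiagonal x.1 ×ˢ antidiagonal x.2
  let τ : (_ : ℕ × ℕ) × (ℕ × ℕ) × (ℕ × ℕ) → (_ : ℕ × ℕ) × (ℕ × ℕ) × (ℕ × ℕ) :=
    fun w => ⟨(w.2.1.1 + w.2.2.1, w.2.1.2 + w.2.2.2), (w.2.1.1, w.2.2.1), (w.2.1.2, w.2.2.2)⟩
  have mapsTo : Set.MapsTo τ S S := by
    rintro ⟨⟨j, m⟩, ⟨p, q⟩, ⟨r, s⟩⟩ h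
    simp only [S, τ, mem_coe, mem_sigma, mem_product, HasAntidiagonal.mem_antidiagonal,
      and_true] at h ⊢
    omega
  have involutive : ∀ w ∈ S, τ (τ w) = w := by
    rintro ⟨⟨j, m⟩, ⟨p, q⟩, ⟨r, s⟩⟩ h
    simp only [S, mem_sigma, mem_product, HasAntidiagonal.mem_antidiagonal] at h
    obtain ⟨-, rfl, rfl⟩ := h
    rfl
  exact sum_nbij' τ τ mapsTo mapsTo involutive involutive fun _ _ => rfl

end Finset.Nat

namespace Ring

theorem multichoose_eq_negOnePow_smul_choose_neg {R : Type*} [CommRing R] [BinomialRing R]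
    (r : R) (k : ℕ) : multichoose r k = Int.negOnePow k • choose (-r) k := by
  rw [choose_neg', smul_smul, ← Int.negOnePow_add, Int.negOnePow_even _ (by simp), one_smul]

theorem multichoose_add {R : Type*} [CommRing R] [BinomialRing R] (r s : R) (k : ℕ) :
    multichoose (r + s) k =
      ∑ ij ∈ antidiagonal k, multichoose r ij.1 * multichoose s ij.2 := by
  simp only [multichoose_eq_negOnePow_smul_choose_neg, neg_add]
  rw [add_choose_eq k (Commute.all (-r) (-s)), smul_sum]
  refine sum_congr rfl fun ij hij => ?_
  rw [← HasAntidiagonal.mem_antidiagonal.1 hij, Nat.cast_add, Int.negOnePow_add,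
    smul_mul_smul_comm]

end Ring

theorem asc_eq_factorial_mul_multichoose (a : ℝ) (m : ℕ) :
    asc a m = m.factorial * Ring.multichoose a m := by
  rw [← nsmul_eq_mul, Ring.factorial_nsmul_multichoose_eq_ascPochhammer,
    Polynomial.ascPochhammer_smeval_eq_eval]
  induction m with
  | zero => simp [asc]
  | succ m ih => rw [asc, prod_range_succ, ← asc, ih, ascPochhammer_succ_eval]

theorem add_pow_div_factorial {K : Type*} [Field K] [CharZero K] (x y : K) (n : ℕ) :
    (x + y) ^ n / n.factorial =
      ∑ ij ∈ antidiagonal n, x ^ ij.1 / ij.1.factorial * (y ^ ij.2 / ij.2.factorial) := by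
  rw [(Commute.all x y).add_pow', sum_div]
  refine sum_congr rfl fun ij hij => ?_
  rw [← HasAntidiagonal.mem_antidiagonal.1 hij, nsmul_eq_mul, Nat.choose_symm_add,
    ← Nat.add_choose_mul_factorial_mul_factorial ij.1 ij.2]
  have : ((ij.1 + ij.2).choose ij.2 : K) ≠ 0 := Nat.cast_ne_zero.2 (Nat.choose_pos (by omega)).ne'
  push_cast
  field_simp

theorem lag_eq_sum_antidiagonal (n : ℕ) (α x : ℝ) :
    lag n α x = ∑ jm ∈ antidiagonal n,
      (-x) ^ jm.1 / jm.1.factorial * Ring.multichoose (α + jm.1 + 1) jm.2 := by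
  rw [lag, ← Nat.sum_antidiagonal_eq_sum_range_succ
    (fun j m => (-1 : ℝ) ^ j / (j.factorial * m.factorial) * asc (α + j + 1) m * x ^ j)]
  refine sum_congr rfl fun jm _ => ?_
  rw [asc_eq_factorial_mul_multichoose, neg_pow x]
  field_simp

theorem lag_add (a b u v : ℝ) (n : ℕ) :
    lag n (a + b + 1) (u + v) = ∑ kl ∈ antidiagonal n, lag kl.1 a u * lag kl.2 b v := by
  set A : ℕ → ℕ → ℝ := fun p r => (-u) ^ p / p.factorial * Ring.multichoose (a + p + 1) r
  set B : ℕ → ℕ → ℝ := fun q s => (-v) ^ q / q.factorial * Ring.multichoose (b + q + 1) s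
  calc lag n (a + b + 1) (u + v)
      = ∑ x ∈ antidiagonal n, ∑ y ∈ antidiagonal x.1, ∑ z ∈ antidiagonal x.2,
          A y.1 z.1 * B y.2 z.2 := by
        rw [lag_eq_sum_antidiagonal]
        refine sum_congr rfl fun jm _ => ?_
        rw [neg_add, add_pow_div_factorial, sum_mul]
        refine sum_congr rfl fun pq hpq => ?_
        rw [← HasAntidiagonal.mem_antidiagonal.1 hpq, Nat.cast_add,
          show a + b + 1 + (pq.1 + pq.2 : ℝ) + 1 = (a + pq.1 + 1) + (b + pq.2 + 1) by ring,
          Ring.multichoose_add, mul_sum]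
        refine sum_congr rfl fun rs _ => ?_
        ring
    _ = ∑ x ∈ antidiagonal n, ∑ y ∈ antidiagonal x.1, ∑ z ∈ antidiagonal x.2,
          A y.1 y.2 * B z.1 z.2 :=
        Nat.sum_antidiagonal_antidiagonal_transpose n fun p q r s => A p r * B q s
    _ = ∑ kl ∈ antidiagonal n, lag kl.1 a u * lag kl.2 b v := by
        simp only [lag_eq_sum_antidiagonal, sum_mul_sum, A, B]

noncomputable def hoddCoeff (n : ℕ) : ℝ := (-1) ^ n * 2 ^ (2 * n + 1) * n.factorial

theorem Hodd_eq (μ : ℝ) (n : ℕ) (x : ℝ) :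
    Hodd μ n x = hoddCoeff n * x * lag n (μ + 1 / 2) (x ^ 2) := rfl

theorem choose_mul_hoddCoeff_mul_hoddCoeff (i j : ℕ) :
    ((i + j).choose i : ℝ) * hoddCoeff i * hoddCoeff j = 2 * hoddCoeff (i + j) := by
  simp only [hoddCoeff]
  rw [← Nat.add_choose_mul_factorial_mul_factorial i j, Nat.choose_symm_add]
  push_cast
  ring

theorem stmt17_general (α β : ℝ) (n : ℕ) (x y : ℝ)
    (hxy : 0 < x ^ 2 + y ^ 2) :
    (x * y / Real.sqrt (x ^ 2 + y ^ 2)) * Hodd (α + β + 3/2) n (Real.sqrt (x ^ 2 + y ^ 2)) =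
      (1 / 2) * ∑ k ∈ Finset.range (n + 1),
        (n.choose k : ℝ) * Hodd α (n - k) x * Hodd β k y := by
  have hs : Real.sqrt (x ^ 2 + y ^ 2) ≠ 0 := (Real.sqrt_pos.2 hxy).ne'
  calc (x * y / Real.sqrt (x ^ 2 + y ^ 2)) * Hodd (α + β + 3/2) n (Real.sqrt (x ^ 2 + y ^ 2))
      = x * y * hoddCoeff n * lag n ((α + 1 / 2) + (β + 1 / 2) + 1) (x ^ 2 + y ^ 2) := by
        rw [Hodd_eq, Real.sq_sqrt hxy.le,
          show α + β + 3 / 2 + 1 / 2 = (α + 1 / 2) + (β + 1 / 2) + 1 by ring]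
        field_simp
    _ = (1 / 2) * ∑ k ∈ Finset.range (n + 1),
          (n.choose k : ℝ) * Hodd α (n - k) x * Hodd β k y := by
        rw [lag_add, ← Nat.sum_antidiagonal_eq_sum_range_succ
          (fun i j => (n.choose i : ℝ) * Hodd α j x * Hodd β i y), ← Nat.sum_antidiagonal_swap,
          mul_sum, mul_sum]
        refine sum_congr rfl fun ij hij => ?_
        rw [← HasAntidiagonal.mem_antidiagonal.1 hij]
        simp only [Prod.fst_swap, Prod.snd_swap, Hodd_eq]
        linear_combination
          (-x * y * lag ij.2 (α + 1 / 2) (x ^ 2) * lag ij.1 (β + 1 / 2) (y ^ 2) / 2) *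
            choose_mul_hoddCoeff_mul_hoddCoeff ij.1 ij.2

theorem stmt17 (α β : ℝ) (hα : α > -(1/2)) (hβ : β > -(1/2)) (n : ℕ) (x y : ℝ)
    (hxy : 0 < x ^ 2 + y ^ 2) :
    (x * y / Real.sqrt (x ^ 2 + y ^ 2)) * Hodd (α + β + 3/2) n (Real.sqrt (x ^ 2 + y ^ 2)) =
      (1 / 2) * ∑ k ∈ Finset.range (n + 1),
        (n.choose k : ℝ) * Hodd α (n - k) x * Hodd β k y :=
  stmt17_general α β n x y hxy
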